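/- arXiv:2405.17812 — 4 statements merged into one kernel-verified Lean document; each statement's English description precedes it below -/
import Mathlib

section
/- Let n and k be positive integers such that k | n or n | k. A pair 𝒜 ∈ Σ^n × Z_k is maximal under ≻ among its rotations if and only if, for every p ≥ 1, the pair 𝒜^p = ⟨A^p, p·u⟩ ∈ Σ^{pn} × Z_k (where 𝒜 = ⟨A,u⟩) is maximal among its rotations. -/
/-- Right rotation by `i` of a pair in `Σ^n × ℤ/k`. -/
def rotPair (s k : ℕ) (i : ℕ) (P : List (Fin s) × ZMod k) : List (Fin s) × ZMod k :=
  (P.1.rotate i, P.2 + (i : ZMod k))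

/-- The order ≻ : `P ≻ Q` iff (same second component and `P.1 > Q.1` lexicographically)
or `(k-1-P.2) > (k-1-Q.2)`, i.e. `P.2 < Q.2` as residues. -/
def succPair (s k : ℕ) (P Q : List (Fin s) × ZMod k) : Prop :=
  (List.Lex (· < ·) Q.1 P.1 ∧ P.2 = Q.2) ∨ P.2.val < Q.2.val

/-- A pair is maximal when no rotation of it is ≻-greater than it. -/
def isMaxPair (s k : ℕ) (P : List (Fin s) × ZMod k) : Prop :=
  ∀ i : ℕ, ¬ succPair s k (rotPair s k i P) P

/-- Appending to equal-length lex-comparable lists preserves lex order. -/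
theorem lex_append_of_length_eq {α : Type*} [LT α] :
    ∀ {B C : List α}, List.Lex (· < ·) B C → B.length = C.length →
      ∀ U V : List α, List.Lex (· < ·) (B ++ U) (C ++ V)
  | _, _, List.Lex.nil, hl, _, _ => by simp at hl
  | _, _, List.Lex.cons h, hl, U, V =>
      List.Lex.cons (lex_append_of_length_eq h (by simpa using hl) U V)
  | _, _, List.Lex.rel h, _, _, _ => List.Lex.rel h

theorem flatten_replicate_append {α : Type*} (A : List α) (p : ℕ) :
    (List.replicate p A).flatten ++ A = A ++ (List.replicate p A).flatten := by
  induction p with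
  | zero => simp
  | succ p ih =>
      simp only [List.replicate_succ, List.flatten_cons, List.append_assoc, ih]

theorem rep_rot {α : Type*} (X Y : List α) :
    ∀ p : ℕ, (List.replicate (p + 1) (X ++ Y)).flatten
      = X ++ ((List.replicate p (Y ++ X)).flatten ++ Y)
  | 0 => by simp
  | p + 1 => by
      have ih := rep_rot X Y p
      simp only [List.replicate_succ, List.flatten_cons] at ih ⊢
      rw [ih]
      simp [List.append_assoc]

theorem flatten_rotate_block {α : Type*} (A : List α) (p r : ℕ) (hr : r ≤ A.length) :
    ((List.replicate (p + 1) A).flatten).rotate r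
      = (List.replicate (p + 1) (A.rotate r)).flatten := by
  have hA : A = A.take r ++ A.drop r := (List.take_append_drop r A).symm
  have hrot : A.rotate r = A.drop r ++ A.take r := List.rotate_eq_drop_append_take hr
  have hlen : r ≤ ((List.replicate (p + 1) A).flatten).length := by
    simp only [List.length_flatten, List.map_replicate, List.sum_replicate, smul_eq_mul]
    calc r ≤ A.length := hr
      _ ≤ (p + 1) * A.length := Nat.le_mul_of_pos_left _ (Nat.succ_pos p)
  rw [List.rotate_eq_drop_append_take hlen, hrot]
  have h1 : (List.replicate (p + 1) A).flatten = A.take r ++ ((List.replicate p (A.drop r ++ A.take r)).flatten ++ A.drop r) := by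
    nth_rewrite 1 [hA]
    rw [rep_rot]
  rw [h1, List.drop_append_of_le_length (by simpa using hr),
    List.take_append_of_le_length (by simpa using hr)]
  have hd : List.drop r (List.take r A) = [] := by simp [List.drop_take]
  have ht : List.take r (List.take r A) = List.take r A := by simp [List.take_take]
  rw [hd, ht, List.nil_append, List.append_assoc, flatten_replicate_append]
  simp [List.replicate_succ]

theorem rotate_period {α : Type*} (L : List α) (n : ℕ) (h : L.rotate n = L) :
    ∀ q r : ℕ, L.rotate (n * q + r) = L.rotate r := by
  intro q
  induction q with
  | zero => simp
  | succ q ih =>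
      intro r
      have : n * (q + 1) + r = n + (n * q + r) := by ring
      rw [this, ← List.rotate_rotate, h, ih]

theorem flatten_rotate_n {α : Type*} (A : List α) (p : ℕ) :
    ((List.replicate (p + 1) A).flatten).rotate A.length
      = (List.replicate (p + 1) A).flatten := by
  have h1 : (List.replicate (p + 1) A).flatten = A ++ (List.replicate p A).flatten := by
    simp [List.replicate_succ]
  rw [h1, List.rotate_eq_drop_append_take (by simp), List.drop_append_of_le_length le_rfl,
    List.take_append_of_le_length le_rfl, List.drop_length, List.take_length, List.nil_append,
    flatten_replicate_append]

/-- `⟨A,u⟩` is maximal among its rotations iff `⟨A^p, p·u⟩` is maximal among its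
rotations for every `p ≥ 1`. -/
theorem stmt4 (s n k : ℕ) (hs : 2 ≤ s) (hn : 0 < n) (hk : 0 < k)
    (hdvd : n ∣ k ∨ k ∣ n) (A : List (Fin s)) (hA : A.length = n) (u : ZMod k) :
    isMaxPair s k (A, u) ↔
      ∀ p : ℕ, 1 ≤ p →
        isMaxPair s k ((List.replicate p A).flatten, (p : ZMod k) * u) := by
  haveI : NeZero k := ⟨hk.ne'⟩
  constructor
  · intro h
    -- first, u = 0
    have hu : u = 0 := by
      by_contra hu
      have hv : 0 < u.val := Nat.pos_of_ne_zero (fun h0 => hu ((ZMod.val_eq_zero u).1 h0))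
      apply h (k - u.val)
      right
      have h0 : u + ((k - u.val : ℕ) : ZMod k) = 0 := by
        have hle : u.val ≤ k := (ZMod.val_lt u).le
        have h2 : ((u.val + (k - u.val) : ℕ) : ZMod k) = 0 := by
          rw [Nat.add_sub_cancel' hle, ZMod.natCast_self]
        rwa [Nat.cast_add, ZMod.natCast_zmod_val] at h2
      simp only [rotPair]
      rw [h0, ZMod.val_zero]
      exact hv
    subst hu
    -- key hypothesis
    have key : ∀ i : ℕ, ((i : ZMod k) = 0) → ¬ List.Lex (· < ·) A (A.rotate i) := by
      intro i hi hlex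
      exact h i (Or.inl ⟨hlex, by simp [rotPair, hi]⟩)
    intro p hp i hsucc
    obtain ⟨q, rfl⟩ := Nat.exists_eq_add_of_le hp
    set L := (List.replicate (1 + q) A).flatten with hL
    rcases hsucc with ⟨hlex, hi⟩ | hval
    · -- (i : ZMod k) = 0
      simp only [rotPair, add_right_cancel_iff] at hi hlex
      have hi0 : (i : ZMod k) = 0 := by simpa using hi
      -- rewrite rotation
      have h1q : 1 + q = q + 1 := by omega
      have hLrot : L.rotate i = (List.replicate (q + 1) (A.rotate (i % n))).flatten := by
        have hper : L.rotate A.length = L := by rw [hL, h1q]; exact flatten_rotate_n A q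
        have := rotate_period L A.length hper (i / A.length) (i % A.length)
        rw [Nat.div_add_mod] at this
        rw [this, hA]
        rw [hL, h1q]
        exact flatten_rotate_block A q (i % n) (by rw [hA]; exact (Nat.mod_lt _ hn).le)
      rw [hLrot] at hlex
      -- compare A with A.rotate (i % n)
      have hkey := key i hi0
      rw [← List.rotate_mod, hA] at hkey
      rcases lt_trichotomy A (A.rotate (i % n)) with hlt | heq | hgt
      · exact hkey hlt
      · rw [← heq, hL, h1q] at hlex
        exact (lt_irrefl ((List.replicate (q + 1) A).flatten) hlex).elim
      · have hlen : (A.rotate (i % n)).length = A.length := List.length_rotate A _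
        have : List.Lex (· < ·) ((List.replicate (q + 1) (A.rotate (i % n))).flatten) L := by
          rw [hL, h1q]
          have step : ∀ m : ℕ, List.Lex (· < ·)
              ((List.replicate (m + 1) (A.rotate (i % n))).flatten)
              ((List.replicate (m + 1) A).flatten) := by
            intro m
            simp only [List.replicate_succ, List.flatten_cons]
            exact lex_append_of_length_eq hgt hlen _ _
          exact step q
        exact (lt_asymm (a := L) hlex) this
    · -- residue strictly decreased: impossible since second component cycles
      simp only [rotPair, mul_zero, zero_add, ZMod.val_zero] at hval
      exact Nat.not_lt_zero _ hval
  · intro h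
    have h1 := h 1 le_rfl
    simpa using h1
end

section
/- Every Lyndon pair is strictly ≻-greater than all of its nontrivial rotations; equivalently, all rotations of a reduced maximal pair are pairwise distinct. -/
/-- Length of the reduction of a word: the least `p` with `k ∣ p`, `p ∣ |A|`
and `A = (A.take p)^{|A|/p}`. -/
noncomputable def reduceLen (s k : ℕ) (A : List (Fin s)) : ℕ :=
  sInf {p : ℕ | k ∣ p ∧ p ∣ A.length ∧
    A = (List.replicate (A.length / p) (A.take p)).flatten}

/-- The reduction of a word. -/
noncomputable def reduceWord (s k : ℕ) (A : List (Fin s)) : List (Fin s) := A.take (reduceLen s k A)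

/-- Lyndon words (of Lyndon pairs `⟨w,0⟩`): reductions of maximal pairs when `k ∣ n`,
expansions of maximal pairs when `n ∣ k`. -/
def isLyndonWord (s n k : ℕ) (w : List (Fin s)) : Prop :=
  (k ∣ n ∧ ∃ A : List (Fin s), A.length = n ∧ isMaxPair s k (A, (0 : ZMod k)) ∧
      w = reduceWord s k A) ∨
  (n ∣ k ∧ ∃ A : List (Fin s), A.length = n ∧ isMaxPair s k (A, (0 : ZMod k)) ∧
      w = (List.replicate (k / n) A).flatten)

/-!
When `n ∣ k` the Lyndon word has length `k`, so every rotation in question is by some `i` with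
`k ∤ i`, and such rotations strictly increase the second component. When `k ∣ n`, the maximal pair
`⟨A, 0⟩` is a power `w ^ m` of its reduction `w`, and rotating `A` by `i ≤ |w|` gives
`(w.rotate i) ^ m`. For `k ∣ i`, `w < w.rotate i` would therefore contradict the maximality of `A`,
and `w.rotate i = w` would make `A` invariant under rotation by `gcd i |w|`, a multiple of `k`
dividing `n` and smaller than `|w|`, contradicting the minimality of the reduction.
-/

namespace List

variable {α : Type*}

theorem Lex.append_of_length_eq {r : α → α → Prop} {u v : List α} (h : Lex r u v)
    (hlen : u.length = v.length) (x y : List α) : Lex r (u ++ x) (v ++ y) := by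
  induction h with
  | nil => simp at hlen
  | rel hab => exact .rel hab
  | cons _ ih => exact .cons (ih (by simpa using hlen))

theorem Lex.flatten_replicate {r : α → α → Prop} {u v : List α} (h : Lex r u v)
    (hlen : u.length = v.length) {m : ℕ} (hm : m ≠ 0) :
    Lex r (replicate m u).flatten (replicate m v).flatten := by
  obtain ⟨m, rfl⟩ := Nat.exists_eq_succ_of_ne_zero hm
  exact h.append_of_length_eq hlen _ _

theorem flatten_replicate_append_comm (x y : List α) (m : ℕ) :
    (replicate m (x ++ y)).flatten ++ x = x ++ (replicate m (y ++ x)).flatten := by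
  induction m with
  | zero => simp
  | succ m ih => simp only [replicate_succ, flatten_cons, append_assoc, ih]

theorem rotate_flatten_replicate {w : List α} {i : ℕ} (hi : i ≤ w.length) (m : ℕ) :
    (replicate m w).flatten.rotate i = (replicate m (w.rotate i)).flatten := by
  obtain ⟨x, y, rfl, rfl⟩ : ∃ x y, w = x ++ y ∧ x.length = i :=
    ⟨w.take i, w.drop i, (take_append_drop i w).symm, length_take_of_le hi⟩
  rw [rotate_append_length_eq]
  cases m with
  | zero => simp
  | succ m =>
    rw [replicate_succ, flatten_cons, append_assoc, rotate_append_length_eq, append_assoc,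
      flatten_replicate_append_comm, ← append_assoc, ← flatten_cons, ← replicate_succ]

theorem rotate_mul_eq_self {l : List α} {d : ℕ} (h : l.rotate d = l) (q : ℕ) :
    l.rotate (d * q) = l := by
  induction q with
  | zero => simp
  | succ q ih => rw [Nat.mul_succ, ← rotate_rotate, ih, h]

theorem rotate_gcd_eq_self {l : List α} {a b : ℕ} (ha : l.rotate a = l) (hb : l.rotate b = l) :
    l.rotate (a.gcd b) = l := by
  induction a, b using Nat.gcd.induction with
  | H0 b => simpa using hb
  | H1 a b _ ih =>
    rw [Nat.gcd_rec]
    refine ih ?_ ha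
    calc l.rotate (b % a) = (l.rotate (a * (b / a))).rotate (b % a) := by
          rw [rotate_mul_eq_self ha]
      _ = l := by rw [rotate_rotate, Nat.div_add_mod, hb]

theorem take_mul_eq_flatten_replicate {l : List α} {d : ℕ} (h : l.rotate d = l) {q : ℕ}
    (hq : d * q ≤ l.length) : l.take (d * q) = (replicate q (l.take d)).flatten := by
  induction q with
  | zero => simp
  | succ q ih =>
    have hdq : d * q ≤ l.length := le_trans (Nat.mul_le_mul_left d q.le_succ) hq
    have hblock : (l.drop (d * q)).take d = l.take d := by
      conv_rhs => rw [← rotate_mul_eq_self h q, rotate_eq_drop_append_take hdq]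
      rw [Nat.mul_succ] at hq
      rw [take_append_of_le_length (by rw [length_drop]; omega)]
    rw [Nat.mul_succ, take_add, ih hdq, hblock, replicate_succ', flatten_concat]

theorem eq_flatten_replicate_take_of_rotate_eq_self {l : List α} {d : ℕ} (h : l.rotate d = l)
    (hd : d ∣ l.length) : l = (replicate (l.length / d) (l.take d)).flatten := by
  calc l = l.take (d * (l.length / d)) := by rw [Nat.mul_div_cancel' hd, take_length]
    _ = _ := take_mul_eq_flatten_replicate h (Nat.mul_div_cancel' hd).le

end List

open List

section LyndonPair

variable {s k : ℕ}

theorem rotPair_zero_of_dvd {i : ℕ} (hki : k ∣ i) (w : List (Fin s)) :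
    rotPair s k i (w, 0) = (w.rotate i, 0) := by
  simp [rotPair, (ZMod.natCast_eq_zero_iff i k).mpr hki]

theorem succPair_of_lt {u v : List (Fin s)} (c : ZMod k) (h : u < v) :
    succPair s k (v, c) (u, c) :=
  Or.inl ⟨h, rfl⟩

theorem succPair_rotPair_zero_of_not_dvd {i : ℕ} (hki : ¬ k ∣ i) (w : List (Fin s)) :
    succPair s k (w, 0) (rotPair s k i (w, 0)) := by
  right
  simp only [rotPair, zero_add, ZMod.val_zero, ZMod.val_natCast]
  exact Nat.pos_of_ne_zero (mt Nat.dvd_of_mod_eq_zero hki)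

theorem not_lt_rotate_of_isMaxPair {A : List (Fin s)} (hmax : isMaxPair s k (A, 0)) {i : ℕ}
    (hki : k ∣ i) : ¬ A < A.rotate i := fun h =>
  hmax i (by rw [rotPair_zero_of_dvd hki]; exact succPair_of_lt 0 h)

variable {A : List (Fin s)}

theorem reduceLen_spec (hkn : k ∣ A.length) :
    k ∣ reduceLen s k A ∧ reduceLen s k A ∣ A.length ∧
      A = (replicate (A.length / reduceLen s k A) (reduceWord s k A)).flatten := by
  have hn : A.length ∈
      {p : ℕ | k ∣ p ∧ p ∣ A.length ∧ A = (replicate (A.length / p) (A.take p)).flatten} :=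
    ⟨hkn, dvd_rfl, by cases A <;> simp⟩
  exact Nat.sInf_mem ⟨_, hn⟩

theorem reduceLen_le {d : ℕ} (hkd : k ∣ d) (hdn : d ∣ A.length)
    (hA : A = (replicate (A.length / d) (A.take d)).flatten) : reduceLen s k A ≤ d :=
  Nat.sInf_le ⟨hkd, hdn, hA⟩

theorem length_reduceWord (hkn : k ∣ A.length) (hA : 0 < A.length) :
    (reduceWord s k A).length = reduceLen s k A :=
  length_take_of_le (Nat.le_of_dvd hA (reduceLen_spec hkn).2.1)

theorem rotate_eq_flatten_replicate_rotate_reduceWord (hkn : k ∣ A.length) {j : ℕ}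
    (hj : j ≤ (reduceWord s k A).length) :
    A.rotate j = (replicate (A.length / reduceLen s k A) ((reduceWord s k A).rotate j)).flatten := by
  conv_lhs => rw [(reduceLen_spec hkn).2.2]
  exact rotate_flatten_replicate hj _

theorem rotate_reduceWord_ne (hkn : k ∣ A.length) {i : ℕ} (hki : k ∣ i) (hi : 0 < i)
    (hiw : i < (reduceWord s k A).length) : (reduceWord s k A).rotate i ≠ reduceWord s k A := by
  intro hfix
  obtain ⟨hkp, hpn, hApow⟩ := reduceLen_spec hkn
  have hwp := length_reduceWord hkn ((hi.trans hiw).trans_le (length_take_le' _ _))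
  have hAi : A.rotate i = A := by
    rw [rotate_eq_flatten_replicate_rotate_reduceWord hkn hiw.le, hfix, ← hApow]
  have hAp : A.rotate (reduceLen s k A) = A := by
    rw [← hwp, rotate_eq_flatten_replicate_rotate_reduceWord hkn le_rfl, rotate_length, ← hApow]
  have hdn : i.gcd (reduceLen s k A) ∣ A.length := (Nat.gcd_dvd_right _ _).trans hpn
  have hpd := reduceLen_le (Nat.dvd_gcd hki hkp) hdn
    (eq_flatten_replicate_take_of_rotate_eq_self (rotate_gcd_eq_self hAi hAp) hdn)
  have hdi := Nat.gcd_le_left (reduceLen s k A) hi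
  omega

theorem not_lt_rotate_reduceWord (hkn : k ∣ A.length) (hmax : isMaxPair s k (A, 0)) {i : ℕ}
    (hki : k ∣ i) (hiw : i < (reduceWord s k A).length) :
    ¬ reduceWord s k A < (reduceWord s k A).rotate i := by
  intro hlt
  have hA : 0 < A.length := ((Nat.zero_le i).trans_lt hiw).trans_le (length_take_le' _ _)
  have hwp := length_reduceWord hkn hA
  have hm : A.length / reduceLen s k A ≠ 0 :=
    (Nat.div_pos (Nat.le_of_dvd hA (reduceLen_spec hkn).2.1) (by omega)).ne'
  apply not_lt_rotate_of_isMaxPair hmax hki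
  rw [rotate_eq_flatten_replicate_rotate_reduceWord hkn hiw.le]
  conv_lhs => rw [(reduceLen_spec hkn).2.2]
  exact Lex.flatten_replicate hlt (length_rotate _ _).symm hm

theorem rotate_reduceWord_lt (hkn : k ∣ A.length) (hmax : isMaxPair s k (A, 0)) {i : ℕ}
    (hki : k ∣ i) (hi : 0 < i) (hiw : i < (reduceWord s k A).length) :
    (reduceWord s k A).rotate i < reduceWord s k A :=
  (lt_trichotomy _ _).resolve_right
    (not_or_intro (rotate_reduceWord_ne hkn hki hi hiw) (not_lt_rotate_reduceWord hkn hmax hki hiw))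

end LyndonPair

theorem stmt5_general (s n k : ℕ) (w : List (Fin s)) (hw : isLyndonWord s n k w) :
    ∀ i : ℕ, 0 < i → i < max w.length k →
      succPair s k (w, (0 : ZMod k)) (rotPair s k i (w, 0)) := by
  intro i hi hilt
  by_cases hki : k ∣ i
  swap
  · exact succPair_rotPair_zero_of_not_dvd hki w
  rw [rotPair_zero_of_dvd hki]
  apply succPair_of_lt
  have hik : k ≤ i := Nat.le_of_dvd hi hki
  have hiw : i < w.length := by
    rw [lt_max_iff] at hilt
    omega
  rcases hw with ⟨hkn, A, rfl, hmax, rfl⟩ | ⟨hnk, A, rfl, -, rfl⟩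
  · exact rotate_reduceWord_lt hkn hmax hki hi hiw
  · simp only [length_flatten, map_replicate, sum_replicate, smul_eq_mul,
      Nat.div_mul_cancel hnk] at hiw
    omega

/-- Every Lyndon pair is strictly ≻-greater than all of its nontrivial rotations. -/
theorem stmt5 (s n k : ℕ) (hs : 2 ≤ s) (hn : 0 < n) (hk : 0 < k)
    (hdvd : n ∣ k ∨ k ∣ n) (w : List (Fin s)) (hw : isLyndonWord s n k w) :
    ∀ i : ℕ, 0 < i → i < max w.length k →
      succPair s k (w, (0 : ZMod k)) (rotPair s k i (w, 0)) :=
  stmt5_general s n k w hw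
end

section
/- Let k | n or n | k, and let 𝒜 = ⟨a₁…a_n, 0⟩ ∈ Σ^n × Z_k be a maximal pair different from ⟨0^n, 0⟩. Let i be such that a_i > 0, and set j = n if n | k, or j = the smallest multiple of k with i ≤ j < n (if it exists) when k | n. Then the pair ℬ = ⟨a₁…a_{i−1}(a_i − 1)(s−1)^{j−i}, 0⟩ ∈ Σ^j × Z_k is maximal among its rotations. -/
namespace List

variable {α : Type*} [LinearOrder α]

theorem append_lt_append_of_lt_of_length_eq {l₁ l₂ : List α} (h : l₁ < l₂)
    (hlen : l₁.length = l₂.length) (x y : List α) : l₁ ++ x < l₂ ++ y := by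
  induction h with
  | nil => simp at hlen
  | rel hab => exact Lex.rel hab
  | cons _ ih => exact Lex.cons (ih (by simpa using hlen))

theorem le_of_append_lt_append_of_length_eq {l₁ l₂ x y : List α} (h : l₁ ++ x < l₂ ++ y)
    (hlen : l₁.length = l₂.length) : l₁ ≤ l₂ :=
  not_lt.mp fun h₂₁ => lt_asymm h (append_lt_append_of_lt_of_length_eq h₂₁ hlen.symm y x)

omit [LinearOrder α] in
theorem rotate_append_cons_of_le_length (P C : List α) (x : α) {t : ℕ} (ht : t ≤ P.length) :
    (P ++ x :: C).rotate t = (P.drop t ++ [x]) ++ (C ++ P.take t) := by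
  rw [rotate_eq_drop_append_take (by simp only [length_append, length_cons]; omega), drop_append_of_le_length ht,
    take_append_of_le_length ht]
  simp

theorem lt_rotate_of_lt_rotate_of_lt {P C D : List α} {d a : α} (hda : d < a) {t : ℕ}
    (ht : 0 < t) (htP : t ≤ P.length) (h : P ++ d :: C < (P ++ d :: C).rotate t) :
    P ++ a :: D < (P ++ a :: D).rotate t := by
  set m := P.length - t + 1
  have hsplit : ∀ (x : α) (E : List α), P ++ x :: E = P.take m ++ (P.drop m ++ x :: E) := by
    intro x E
    rw [← append_assoc, take_append_drop]
  have hlen : ∀ x : α, (P.take m).length = (P.drop t ++ [x]).length := by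
    intro x
    simp only [length_take, length_append, length_drop, length_singleton]
    omega
  rw [rotate_append_cons_of_le_length _ _ _ htP, hsplit] at h
  rw [rotate_append_cons_of_le_length _ _ _ htP, hsplit]
  have hle : P.take m ≤ P.drop t ++ [d] := le_of_append_lt_append_of_length_eq h (hlen d)
  have hda' : P.drop t ++ [d] < P.drop t ++ [a] := append_left_lt (Lex.rel hda)
  exact append_lt_append_of_lt_of_length_eq (lt_of_le_of_lt hle hda') (hlen a) _ _

end List

theorem isMaxPair_zero_iff {s : ℕ} (k : ℕ) (L : List (Fin s)) :
    isMaxPair s k (L, 0) ↔ ∀ r, k ∣ r → ¬ L < L.rotate r := by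
  simp only [isMaxPair, succPair, rotPair, zero_add, ZMod.val_zero, Nat.not_lt_zero, or_false,
    ZMod.natCast_eq_zero_iff, not_and']
  rfl

/-- If `⟨A,0⟩ ∈ Σ^n × ℤ/k` is maximal, `A ≠ 0^n`, `a` is the symbol of `A` at (0-based)
position `i` with `a > 0`, and `j = n` in case `n ∣ k`, or `j` is the least multiple of `k`
with (1-based) `i+1 ≤ j < n` in case `k ∣ n`, then
`⟨A_i (a-1) (s-1)^{j-i-1}, 0⟩ ∈ Σ^j × ℤ/k` is maximal among its rotations. -/
theorem stmt6 (s n k : ℕ) (hs : 2 ≤ s)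
    (A : List (Fin s)) (hA : A.length = n)
    (hmax : isMaxPair s k (A, (0 : ZMod k)))
    (i : ℕ) (a : Fin s) (ha : A[i]? = some a) (hapos : 0 < a.val)
    (j : ℕ)
    (hj : (n ∣ k ∧ j = n) ∨
          (k ∣ n ∧ k ∣ j ∧ i < j ∧ j < n ∧ ∀ j' : ℕ, k ∣ j' → i < j' → j ≤ j')) :
    isMaxPair s k
      ((A.take i ++ (⟨a.val - 1, by have := a.isLt; omega⟩ : Fin s) ::
          List.replicate (j - i - 1) (⟨s - 1, by omega⟩ : Fin s)), (0 : ZMod k)) := by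
  obtain ⟨hi, rfl⟩ := List.getElem?_eq_some_iff.mp ha
  have hij : i < j := by omega
  have hmod : ∀ r, k ∣ r → r % j = 0 ∨ (0 < r % j ∧ r % j ≤ i ∧ k ∣ r % j) := by
    intro r hkr
    rcases hj with ⟨hnk, rfl⟩ | ⟨-, hkj, -, -, hmin⟩
    · exact Or.inl (Nat.mod_eq_zero_of_dvd (hnk.trans hkr))
    · have hkt : k ∣ r % j := (Nat.dvd_mod_iff hkj).mpr hkr
      have hmin_le := hmin (r % j) hkt
      have hlt_j := Nat.mod_lt r (by omega : 0 < j)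
      omega
  rw [isMaxPair_zero_iff] at hmax ⊢
  intro r hkr hlt
  rw [← List.rotate_mod, List.length_append, List.length_take, List.length_cons,
    List.length_replicate, show min i A.length + (j - i - 1 + 1) = j by omega] at hlt
  rcases hmod r hkr with h0 | ⟨ht, hti, hkt⟩
  · rw [h0, List.rotate_zero] at hlt
    exact lt_irrefl _ hlt
  · refine hmax _ hkt ?_
    rw [← List.take_append_drop i A, ← List.getElem_cons_drop hi]
    exact List.lt_rotate_of_lt_rotate_of_lt (Fin.mk_lt_of_lt_val (by omega)) ht
      (by rw [List.length_take]; omega) hlt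
end

section
/- Let k | n or n | k, and let 𝒜 = ⟨A,0⟩ be a pair in Σ^n × Z_k with A ≠ 0^n, and 𝒞 = θ(𝒜). Then there is no maximal pair ℬ with 𝒜 ≻ ℬ ≻ 𝒞. In other words, θ never skips over a maximal pair. -/
/-- The operator θ on words. -/
def thetaWord (s k : ℕ) (A : List (Fin s)) : List (Fin s) :=
  let n := A.length
  let i := n - (A.reverse.takeWhile (fun a => a.val == 0)).length
  match A[i - 1]? with
  | none => A
  | some a =>
      let j := i + ((n - i) % k)
      let q := n / j
      (List.replicate q (A.take (i-1) ++
          (⟨a.val - 1, Nat.lt_of_le_of_lt (Nat.sub_le _ _) a.isLt⟩ : Fin s) ::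
          List.replicate (j - i)
            (⟨s - 1, Nat.sub_lt (Nat.lt_of_le_of_lt (Nat.zero_le a.val) a.isLt) Nat.one_pos⟩ : Fin s))).flatten
        ++ A.take (n - q * j)

/-- The operator θ on pairs with second component 0. -/
def thetaPair (s k : ℕ) (P : List (Fin s) × ZMod k) : List (Fin s) × ZMod k :=
  (thetaWord s k P.1, 0)

namespace List

variable {α : Type*}

theorem exists_eq_append_cons_replicate_of_ne_replicate {x : α} {A : List α}
    (hA : A ≠ replicate A.length x) : ∃ P a z, a ≠ x ∧ A = P ++ a :: replicate z x := by
  induction A using reverseRecOn with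
  | nil => simp at hA
  | append_singleton A b ih =>
    by_cases hb : b = x
    · subst hb
      have hA' : A ≠ replicate A.length b := by
        intro h
        rw [length_append, length_singleton, replicate_succ', ← h] at hA
        exact hA rfl
      obtain ⟨P, a, z, ha, rfl⟩ := ih hA'
      exact ⟨P, a, z + 1, ha, by simp [replicate_succ']⟩
    · exact ⟨A, b, 0, hb, by simp⟩

theorem Lex.exists_eq_append_cons {r : α → α → Prop} :
    ∀ {l₁ l₂ : List α}, Lex r l₁ l₂ → l₁.length = l₂.length →
      ∃ X c b t₁ t₂, r c b ∧ l₁ = X ++ c :: t₁ ∧ l₂ = X ++ b :: t₂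
  | _, _, .nil, h => by simp at h
  | _, _, .cons (a := a) hl, h => by
    obtain ⟨X, c, b, t₁, t₂, hcb, rfl, rfl⟩ := hl.exists_eq_append_cons (by simpa using h)
    exact ⟨a :: X, c, b, t₁, t₂, hcb, rfl, rfl⟩
  | _, _, .rel (l₁ := t₁) (l₂ := t₂) hab, _ => ⟨[], _, _, t₁, t₂, hab, rfl, rfl⟩

theorem lex_append_swap_of_prefix {r : α → α → Prop} {U C B : List α} (hU : U ≠ [])
    (hC : C <+: U ++ C) (hlen : C.length = B.length) (h : Lex r C B) :
    Lex r (U ++ B) (B ++ U) := by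
  obtain ⟨X, c, b, t₁, t₂, hcb, rfl, rfl⟩ := h.exists_eq_append_cons hlen
  obtain ⟨V, hV⟩ : X ++ [c] <+: U ++ X := by
    refine prefix_of_prefix_length_le ((prefix_append _ t₁).trans ?_) (prefix_append _ (c :: t₁))
      (by simpa using length_pos_iff.2 hU)
    simpa using hC
  have : U ++ (X ++ b :: t₂) = X ++ c :: (V ++ b :: t₂) := by
    rw [← append_assoc, ← hV]; simp
  rw [this, append_assoc, cons_append]
  exact Lex.append_left r (Lex.rel hcb) X

theorem flatten_replicate_append_prefix {u v : List α} (hv : v <+: u) (m : ℕ) :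
    (replicate m u).flatten ++ v <+: u ++ ((replicate m u).flatten ++ v) := by
  have : u ++ (replicate m u).flatten = (replicate m u).flatten ++ u := by
    rw [← flatten_cons, ← replicate_succ, replicate_succ', flatten_append]; simp
  rw [← append_assoc, this, append_assoc, prefix_append_right_inj]
  exact hv.trans (prefix_append u v)

variable [Preorder α]

theorem exists_eq_append_of_append_lt_append {P C A B : List α}
    (hCB : P ++ C < B) (hBA : B < P ++ A) : ∃ B', B = P ++ B' ∧ C < B' ∧ B' < A := by
  induction P generalizing B with
  | nil => exact ⟨B, rfl, hCB, hBA⟩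
  | cons x P ih =>
    obtain _ | ⟨y, B⟩ := B
    · exact absurd hCB (not_lex_nil)
    rw [cons_append, cons_lt_cons_iff] at hCB hBA
    obtain hxy | ⟨rfl, hCB⟩ := hCB
    · obtain hyx | ⟨rfl, -⟩ := hBA
      · exact absurd (hxy.trans hyx) (lt_irrefl _)
      · exact absurd hxy (lt_irrefl _)
    obtain hyx | ⟨-, hBA⟩ := hBA
    · exact absurd hyx (lt_irrefl _)
    obtain ⟨B', rfl, h₁, h₂⟩ := ih hCB hBA
    exact ⟨B', rfl, h₁, h₂⟩

theorem not_lt_replicate_of_isMin {x : α} (hx : IsMin x) :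
    ∀ {z : ℕ} {L : List α}, z ≤ L.length → ¬ L < replicate z x
  | 0, _, _ => not_lex_nil
  | _ + 1, [], h => by simp at h
  | _ + 1, y :: L, h => by
    rw [replicate_succ, cons_lt_cons_iff]
    rintro (hyx | ⟨-, hL⟩)
    · exact hx.not_lt hyx
    · exact not_lt_replicate_of_isMin hx (by simpa using h) hL

theorem exists_eq_replicate_append_of_replicate_append_lt {x : α} (hx : IsMax x) :
    ∀ {e : ℕ} {C B : List α}, replicate e x ++ C < B → ∃ B₁, B = replicate e x ++ B₁ ∧ C < B₁
  | 0, _, B, h => ⟨B, rfl, h⟩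
  | _ + 1, _, [], h => absurd h not_lex_nil
  | _ + 1, _, y :: B, h => by
    rw [replicate_succ, cons_append, cons_lt_cons_iff] at h
    obtain hxy | ⟨rfl, h⟩ := h
    · exact absurd hxy hx.not_lt
    obtain ⟨B₁, rfl, hB₁⟩ := exists_eq_replicate_append_of_replicate_append_lt hx h
    exact ⟨B₁, rfl, hB₁⟩

theorem exists_eq_append_cons_of_lt_of_lt {P C B : List α} {c a x : α} (hca : c ⋖ a)
    (hx : IsMin x) {z : ℕ} (hCB : P ++ c :: C < B) (hBA : B < P ++ a :: replicate z x)
    (hlen : B.length = P.length + 1 + z) : ∃ B', B = P ++ c :: B' ∧ C < B' := by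
  obtain ⟨_ | ⟨b, B'⟩, rfl, hcB, hBa⟩ := exists_eq_append_of_append_lt_append hCB hBA
  · exact absurd hcB not_lex_nil
  rw [cons_lt_cons_iff] at hcB hBa
  obtain hba | ⟨-, hBZ⟩ := hBa
  · obtain hcb | ⟨rfl, hCB'⟩ := hcB
    · exact absurd hba (hca.2 hcb)
    · exact ⟨B', rfl, hCB'⟩
  · exact absurd hBZ (not_lt_replicate_of_isMin hx (by simp at hlen; omega))

end List

open List

variable {s : ℕ}

def thetaBlock (P : List (Fin s)) (a : Fin s) (e : ℕ) : List (Fin s) :=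
  P ++ (⟨a.val - 1, Nat.lt_of_le_of_lt (Nat.sub_le _ _) a.isLt⟩ : Fin s) ::
    replicate e (⟨s - 1, Nat.sub_lt a.pos Nat.one_pos⟩ : Fin s)

@[simp]
theorem length_thetaBlock (P : List (Fin s)) (a : Fin s) (e : ℕ) :
    (thetaBlock P a e).length = P.length + 1 + e := by
  simp [thetaBlock]; omega

theorem exists_eq_thetaBlock_append {h₀ : 0 < s} {P C₁ B : List (Fin s)} {a : Fin s}
    (ha : a ≠ ⟨0, h₀⟩) {e z : ℕ} (hCB : thetaBlock P a e ++ C₁ < B)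
    (hBA : B < P ++ a :: replicate z ⟨0, h₀⟩) (hlen : B.length = P.length + 1 + z) :
    ∃ B₁, B = thetaBlock P a e ++ B₁ ∧ C₁ < B₁ := by
  have ha' : a.val ≠ 0 := fun h => ha (Fin.ext h)
  have hpred : (⟨a.val - 1, Nat.lt_of_le_of_lt (Nat.sub_le _ _) a.isLt⟩ : Fin s) ⋖ a :=
    ⟨Fin.lt_def.2 (by simp; omega), fun c h₁ h₂ => by rw [Fin.lt_def] at h₁ h₂; simp at h₁; omega⟩
  have hmin : IsMin (⟨0, h₀⟩ : Fin s) := fun c _ => Fin.le_def.2 (Nat.zero_le _)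
  have hmax : IsMax (⟨s - 1, Nat.sub_lt a.pos Nat.one_pos⟩ : Fin s) :=
    fun c _ => Fin.le_def.2 (by simp; omega)
  rw [thetaBlock, append_assoc, cons_append] at hCB
  obtain ⟨B', rfl, hB'⟩ := exists_eq_append_cons_of_lt_of_lt hpred hmin hCB hBA hlen
  obtain ⟨B₁, rfl, hB₁⟩ := exists_eq_replicate_append_of_replicate_append_lt hmax hB'
  exact ⟨B₁, by simp [thetaBlock], hB₁⟩

theorem Nat.dvd_add_mod_of_dvd_add {k i z : ℕ} (h : k ∣ i + z) : k ∣ i + z % k := by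
  rwa [Nat.dvd_iff_mod_eq_zero, Nat.add_mod_mod, ← Nat.dvd_iff_mod_eq_zero]

theorem Nat.mod_add_mod_lt_of_dvd_add {k i z : ℕ} (h : k ∣ i + z) (hi : 0 < i) :
    (i + z) % (i + z % k) < i := by
  obtain rfl | hk := k.eq_zero_or_pos
  · rw [Nat.zero_dvd] at h; omega
  have hkj := Nat.dvd_add_mod_of_dvd_add h
  have hrj : (i + z) % (i + z % k) < i + z % k := Nat.mod_lt _ (by omega)
  have := Nat.le_of_dvd (by omega) (Nat.dvd_sub hkj ((Nat.dvd_mod_iff hkj).2 h))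
  have := Nat.mod_lt z hk
  omega

theorem Nat.mod_eq_self_of_add_dvd {k i z : ℕ} (h : i + z ∣ k) (hi : 0 < i) : z % k = z := by
  obtain rfl | hk := k.eq_zero_or_pos
  · exact Nat.mod_zero z
  · exact Nat.mod_eq_of_lt (by have := Nat.le_of_dvd hk h; omega)

section thetaWord

variable {h₀ : 0 < s} {P : List (Fin s)} {a : Fin s}

theorem thetaWord_append_cons_replicate (ha : a ≠ ⟨0, h₀⟩) (z k : ℕ) :
    let n := P.length + 1 + z
    let j := P.length + 1 + z % k
    thetaWord s k (P ++ a :: replicate z ⟨0, h₀⟩) =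
      (replicate (n / j) (thetaBlock P a (z % k))).flatten ++
        (P ++ a :: replicate z ⟨0, h₀⟩).take (n % j) := by
  intro n j
  have hz : ((P ++ a :: replicate z ⟨0, h₀⟩).reverse.takeWhile (·.val == 0)).length = z := by
    have ha' : a.val ≠ 0 := fun h => ha (Fin.ext h)
    simp [ha']
  have hlen : (P ++ a :: replicate z ⟨0, h₀⟩).length = n := by simp [n]; omega
  simp only [thetaWord, hz, hlen, show n - z = P.length + 1 by omega, Nat.add_sub_cancel,
    getElem?_append_right le_rfl, Nat.sub_self, getElem?_cons_zero, take_left',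
    ← Nat.mod_eq_sub_div_mul, show n - (P.length + 1) = z by omega, Nat.add_sub_cancel_left]
  rfl

theorem length_thetaWord_append_cons_replicate (ha : a ≠ ⟨0, h₀⟩) (z k : ℕ) :
    (thetaWord s k (P ++ a :: replicate z ⟨0, h₀⟩)).length = P.length + 1 + z := by
  have := Nat.div_add_mod' (P.length + 1 + z) (P.length + 1 + z % k)
  have := Nat.mod_le (P.length + 1 + z) (P.length + 1 + z % k)
  simp [thetaWord_append_cons_replicate ha, length_flatten]
  omega

theorem exists_thetaWord_eq_thetaBlock_append (ha : a ≠ ⟨0, h₀⟩) {z k : ℕ}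
    (hk : k ∣ P.length + 1 + z) :
    ∃ C₁, thetaWord s k (P ++ a :: replicate z ⟨0, h₀⟩) = thetaBlock P a (z % k) ++ C₁ ∧
      C₁ <+: thetaBlock P a (z % k) ++ C₁ := by
  have hr := Nat.lt_succ_iff.1 (Nat.mod_add_mod_lt_of_dvd_add hk (Nat.succ_pos P.length))
  have hq : 0 < (P.length + 1 + z) / (P.length + 1 + z % k) :=
    Nat.div_pos (Nat.add_le_add_left (Nat.mod_le z k) _) (by omega)
  obtain ⟨m, hm⟩ := Nat.exists_eq_add_one_of_ne_zero hq.ne'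
  rw [thetaWord_append_cons_replicate ha, hm, replicate_succ, flatten_cons, append_assoc,
    take_append_of_le_length hr]
  exact ⟨_, rfl, flatten_replicate_append_prefix ((take_prefix _ P).trans (prefix_append _ _)) m⟩

theorem thetaWord_eq_thetaBlock_of_dvd (ha : a ≠ ⟨0, h₀⟩) {z k : ℕ}
    (hk : P.length + 1 + z ∣ k) :
    thetaWord s k (P ++ a :: replicate z ⟨0, h₀⟩) = thetaBlock P a z := by
  have hz := Nat.mod_eq_self_of_add_dvd hk (Nat.succ_pos P.length)
  rw [thetaWord_append_cons_replicate ha]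
  simp [hz]

end thetaWord

theorem succPair_mk_zero_iff {k : ℕ} {P : List (Fin s) × ZMod k} {Q : List (Fin s)} :
    succPair s k P (Q, 0) ↔ Q < P.1 ∧ P.2 = 0 := by
  simp [succPair, ZMod.val_zero]

theorem isMaxPair.not_lt_rotate {k : ℕ} {W : List (Fin s)} (h : isMaxPair s k (W, 0)) {d : ℕ}
    (hd : k ∣ d) : ¬ W < W.rotate d :=
  fun hlt => h d (Or.inl ⟨hlt, by simp [rotPair, (ZMod.natCast_eq_zero_iff d k).2 hd]⟩)

/-- θ never skips over a maximal pair: there is no maximal pair strictly ≻-between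
`⟨A,0⟩` and `θ⟨A,0⟩`. -/
theorem stmt11 (s n k : ℕ) (hs : 2 ≤ s)
    (hdvd : k ∣ n ∨ n ∣ k)
    (A : List (Fin s)) (hA : A.length = n)
    (hA0 : A ≠ List.replicate n (⟨0, by omega⟩ : Fin s)) :
    ¬ ∃ B : List (Fin s) × ZMod k, B.1.length = n ∧ isMaxPair s k B ∧
        succPair s k (A, (0 : ZMod k)) B ∧ succPair s k B (thetaPair s k (A, 0)) := by
  rintro ⟨⟨B, b⟩, hBlen, hmax, hAB, hBC⟩
  obtain ⟨hCB, rfl⟩ := succPair_mk_zero_iff.1 hBC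
  have hBA : B < A := (succPair_mk_zero_iff.1 hAB).1
  have hA_ne : A ≠ replicate A.length (⟨0, zero_lt_two.trans_le hs⟩ : Fin s) := by rwa [hA]
  subst hA
  clear hA0 hAB hBC
  obtain ⟨P, a, z, ha, rfl⟩ := exists_eq_append_cons_replicate_of_ne_replicate hA_ne
  have hn : (P ++ a :: replicate z ⟨0, zero_lt_two.trans_le hs⟩).length = P.length + 1 + z := by
    simp; omega
  dsimp only [thetaPair] at hCB hBlen
  rw [hn] at hBlen hdvd
  by_cases hkn : k ∣ P.length + 1 + z
  · obtain ⟨C₁, hC, hper⟩ := exists_thetaWord_eq_thetaBlock_append ha hkn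
    have hClen := length_thetaWord_append_cons_replicate (P := P) ha z k
    rw [hC] at hCB hClen
    obtain ⟨B₁, rfl, hB₁⟩ := exists_eq_thetaBlock_append ha hCB hBA hBlen
    have hkU : k ∣ (thetaBlock P a (z % k)).length := by
      simpa using Nat.dvd_add_mod_of_dvd_add hkn
    refine hmax.not_lt_rotate hkU ?_
    rw [rotate_append_length_eq]
    exact lex_append_swap_of_prefix (by simp [thetaBlock]) hper
      (by simp only [length_append] at hClen hBlen; omega) hB₁
  · rw [thetaWord_eq_thetaBlock_of_dvd ha (hdvd.resolve_left hkn), ← append_nil (thetaBlock _ _ _)]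
      at hCB
    obtain ⟨B₁, rfl, hB₁⟩ := exists_eq_thetaBlock_append ha hCB hBA hBlen
    obtain rfl : B₁ = [] := by simpa using hBlen
    simp at hB₁
end
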